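/- arXiv:1801.05966 — 7 statements merged into one kernel-verified Lean document; each statement's English description precedes it below -/
import Mathlib

section
/- Let * be a continuous t-norm. For all monotone maps φ, ψ : [0,∞] → [0,1], it holds that φ⁻ ⊗ ψ⁻ = (φ ⊗ ψ)⁻, i.e., for every t ∈ [0,∞], (φ⁻ ⊗ ψ⁻)(t) = sup_{s<t} (φ ⊗ ψ)(s). -/
open unitInterval
open scoped ENNReal

noncomputable section

instance : Fact ((0:ℝ) ≤ 1) := ⟨zero_le_one⟩

/-- A distance distribution: a map `φ : [0,∞] → [0,1]` with `φ t = ⨆ s < t, φ s`. -/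
def DistDistr (φ : ℝ≥0∞ → I) : Prop :=
  ∀ t, φ t = ⨆ (s : ℝ≥0∞) (_ : s < t), φ s

/-- The one-step function `κ_{p,a}`. -/
def kappa (p : ℝ≥0∞) (a : I) : ℝ≥0∞ → I :=
  fun t => if t ≤ p then 0 else a

/-- A continuous t-norm on `[0,1]`. -/
structure ContinuousTNorm where
  mul : I → I → I
  continuous' : Continuous fun p : I × I => mul p.1 p.2
  comm : ∀ a b, mul a b = mul b a
  assoc : ∀ a b c, mul (mul a b) c = mul a (mul b c)
  mono : ∀ a, Monotone (mul a)
  mul_one : ∀ a, mul a 1 = a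

/-- The residual `a →* b` of a continuous t-norm. -/
def ContinuousTNorm.residual (T : ContinuousTNorm) (a b : I) : I :=
  sSup {c | T.mul a c ≤ b}

/-- Convolution of maps `[0,∞] → [0,1]` w.r.t. a continuous t-norm. -/
def conv (T : ContinuousTNorm) (φ ψ : ℝ≥0∞ → I) : ℝ≥0∞ → I :=
  fun t => ⨆ (r : ℝ≥0∞) (s : ℝ≥0∞) (_ : r + s = t), T.mul (φ r) (ψ s)

/-- `φ⁻ t = ⨆ s < t, φ s`. -/
def lower (φ : ℝ≥0∞ → I) : ℝ≥0∞ → I :=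
  fun t => ⨆ (s : ℝ≥0∞) (_ : s < t), φ s

lemma ContinuousTNorm.zero_mul (T : ContinuousTNorm) (a : I) : T.mul 0 a = 0 :=
  le_antisymm ((T.mono 0 le_one').trans_eq (T.mul_one 0)) bot_le

lemma ContinuousTNorm.mul_sSup_le (T : ContinuousTNorm) (a : I) (S : Set I) (hS : S.Nonempty) :
    T.mul a (sSup S) ≤ sSup ((fun b => T.mul a b) '' S) := by
  have hc : Continuous fun b : I => T.mul a b := T.continuous'.comp (Continuous.prodMk_right a)
  have h2 : T.mul a (sSup S) ∈ closure ((fun b => T.mul a b) '' S) :=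
    image_closure_subset_closure_image hc ⟨_, sSup_mem_closure hS, rfl⟩
  have h3 : closure ((fun b => T.mul a b) '' S) ⊆ Set.Iic (sSup ((fun b => T.mul a b) '' S)) := by
    rw [← isClosed_Iic.closure_eq]
    exact closure_mono fun x hx => le_sSup hx
  exact h3 h2

lemma ContinuousTNorm.mul_iSup_le {ι : Sort*} [Nonempty ι] (T : ContinuousTNorm) (a : I)
    (f : ι → I) : T.mul a (⨆ i, f i) ≤ ⨆ i, T.mul a (f i) := by
  have h := T.mul_sSup_le a (Set.range f) (Set.range_nonempty f)
  calc T.mul a (⨆ i, f i) ≤ sSup ((fun b => T.mul a b) '' Set.range f) := by rwa [iSup]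
    _ = ⨆ i, T.mul a (f i) := by rw [← Set.range_comp]; rfl

lemma lower_subtype (φ : ℝ≥0∞ → I) (r : ℝ≥0∞) :
    lower φ r = ⨆ x : {s : ℝ≥0∞ // s < r}, φ x := by
  rw [lower, iSup_subtype']

/-- for monotone `φ ψ : [0,∞] → [0,1]`, `φ⁻ ⊗ ψ⁻ = (φ ⊗ ψ)⁻`. -/
theorem stmt_3 (T : ContinuousTNorm) (φ ψ : ℝ≥0∞ → I) (hφ : Monotone φ) (hψ : Monotone ψ) :
    ∀ t, conv T (lower φ) (lower ψ) t = ⨆ (s : ℝ≥0∞) (_ : s < t), conv T φ ψ s := by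
  intro t
  apply le_antisymm
  · refine iSup_le fun r => iSup_le fun s => iSup_le fun hrs => ?_
    rcases eq_or_ne r 0 with rfl | hr
    · have h0 : lower φ 0 = 0 := by
        simp [lower, ENNReal.not_lt_zero]
        rfl
      rw [h0, T.zero_mul]
      exact bot_le
    rcases eq_or_ne s 0 with rfl | hs
    · have h0 : lower ψ 0 = 0 := by
        simp [lower, ENNReal.not_lt_zero]
        rfl
      rw [h0, T.comm, T.zero_mul]
      exact bot_le
    -- r, s > 0
    have : Nonempty {x : ℝ≥0∞ // x < r} := ⟨⟨0, pos_iff_ne_zero.mpr hr⟩⟩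
    have : Nonempty {x : ℝ≥0∞ // x < s} := ⟨⟨0, pos_iff_ne_zero.mpr hs⟩⟩
    rw [lower_subtype ψ s]
    refine (T.mul_iSup_le _ _).trans (iSup_le fun x => ?_)
    rw [T.comm, lower_subtype φ r]
    refine (T.mul_iSup_le _ _).trans (iSup_le fun y => ?_)
    rw [T.comm]
    have hlt : (y : ℝ≥0∞) + (x : ℝ≥0∞) < t := hrs ▸ ENNReal.add_lt_add y.2 x.2
    calc T.mul (φ y) (ψ x) ≤ conv T φ ψ ((y : ℝ≥0∞) + x) := by
          exact le_iSup₂_of_le (y : ℝ≥0∞) (x : ℝ≥0∞) (le_iSup_of_le rfl le_rfl)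
      _ ≤ ⨆ (u : ℝ≥0∞) (_ : u < t), conv T φ ψ u := le_iSup₂_of_le _ hlt le_rfl
  · refine iSup_le fun u => iSup_le fun hut => ?_
    refine iSup_le fun r => iSup_le fun s => iSup_le fun hrs => ?_
    set d := t - u with hd
    have hd0 : d ≠ 0 := by
      simp only [hd, ← pos_iff_ne_zero, tsub_pos_iff_lt]; exact hut
    have hhalf : 0 < d / 2 := ENNReal.half_pos hd0
    have hru : r ≤ u := hrs ▸ le_self_add
    have hsu : s ≤ u := hrs ▸ le_add_self
    have hune : u ≠ ∞ := hut.ne_top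
    have hsum : (r + d / 2) + (s + d / 2) = t := by
      have : d / 2 + d / 2 = d := ENNReal.add_halves d
      calc (r + d / 2) + (s + d / 2) = (r + s) + (d / 2 + d / 2) := by ring
        _ = u + d := by rw [hrs, this]
        _ = t := add_tsub_cancel_of_le hut.le
    have hr' : r < r + d / 2 :=
      ENNReal.lt_add_right (hru.trans_lt (lt_of_le_of_ne le_top hune)).ne hhalf.ne'
    have hs' : s < s + d / 2 :=
      ENNReal.lt_add_right (hsu.trans_lt (lt_of_le_of_ne le_top hune)).ne hhalf.ne'
    have h1 : φ r ≤ lower φ (r + d / 2) := le_iSup₂_of_le r hr' le_rfl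
    have h2 : ψ s ≤ lower ψ (s + d / 2) := le_iSup₂_of_le s hs' le_rfl
    have hmul : T.mul (φ r) (ψ s) ≤ T.mul (lower φ (r + d / 2)) (lower ψ (s + d / 2)) := by
      calc T.mul (φ r) (ψ s) ≤ T.mul (φ r) (lower ψ (s + d / 2)) := T.mono _ h2
        _ = T.mul (lower ψ (s + d / 2)) (φ r) := T.comm _ _
        _ ≤ T.mul (lower ψ (s + d / 2)) (lower φ (r + d / 2)) := T.mono _ h1
        _ = _ := T.comm _ _
    exact hmul.trans (le_iSup₂_of_le (r + d / 2) (s + d / 2) (le_iSup_of_le hsum le_rfl))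
end
end

section
/- Let * be a continuous t-norm, let φ be a distance distribution, and let ψ : [0,∞] → [0,1] be a monotone map. Then (φ ⊗ ψ⁻)(t) = (φ ⊗ ψ)(t) for every t ∈ [0,∞) (i.e., for every finite t). -/
open unitInterval
open scoped ENNReal

noncomputable section

lemma TN.mul_bot (T : ContinuousTNorm) (a : I) : T.mul a ⊥ = ⊥ := by
  have h := T.mono a (le_of_eq rfl : (⊥ : I) ≤ ⊥)
  have : T.mul a ⊥ ≤ T.mul a 1 := T.mono a (le_top.trans_eq (by rfl))
  rw [T.mul_one] at this
  -- better: T.mul a ⊥ = T.mul ⊥ a ≤ T.mul ⊥ 1 = ⊥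
  have h2 : T.mul a ⊥ = T.mul ⊥ a := T.comm a ⊥
  have h3 : T.mul ⊥ a ≤ T.mul ⊥ 1 := T.mono ⊥ le_top
  rw [T.mul_one] at h3
  exact le_antisymm (h2 ▸ h3) bot_le

lemma TN.map_iSup (T : ContinuousTNorm) (c : I) {ι : Sort*} (g : ι → I) :
    T.mul c (⨆ i, g i) = ⨆ i, T.mul c (g i) := by
  refine Monotone.map_iSup_of_continuousAt ?_ (T.mono c) (TN.mul_bot T c)
  exact (T.continuous'.comp (Continuous.prodMk_right c)).continuousAt

/-- if `φ` is a distance distribution and `ψ` is monotone, then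
`(φ ⊗ ψ⁻) t = (φ ⊗ ψ) t` for every finite `t`. -/
theorem stmt_4 (T : ContinuousTNorm) (φ ψ : ℝ≥0∞ → I) (hφ : DistDistr φ) (hψ : Monotone ψ) :
    ∀ t : ℝ≥0∞, t ≠ ∞ → conv T φ (lower ψ) t = conv T φ ψ t := by
  intro t ht
  apply le_antisymm
  · refine iSup_le fun r => iSup_le fun s => iSup_le fun hrs => ?_
    have hl : lower ψ s ≤ ψ s := iSup_le fun s' => iSup_le fun h => hψ h.le
    calc T.mul (φ r) (lower ψ s) ≤ T.mul (φ r) (ψ s) := T.mono _ hl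
      _ ≤ _ := by
        apply le_iSup_of_le r; apply le_iSup_of_le s; exact le_iSup_of_le hrs le_rfl
  · refine iSup_le fun r => iSup_le fun s => iSup_le fun hrs => ?_
    have key : T.mul (φ r) (ψ s) = ⨆ (r' : ℝ≥0∞) (_ : r' < r), T.mul (φ r') (ψ s) := by
      rw [T.comm, hφ r, TN.map_iSup]
      congr 1; funext r'
      rw [TN.map_iSup, T.comm]
    rw [key]
    refine iSup_le fun r' => iSup_le fun hr' => ?_
    have hrt : r ≤ t := hrs ▸ le_self_add
    have hr't : r' ≤ t := (hr'.le.trans hrt)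
    set s' := t - r' with hs'
    have hsum : r' + s' = t := add_tsub_cancel_of_le hr't
    have hrne : r' ≠ ∞ := fun h => ht (top_le_iff.mp (h ▸ hr't))
    have hss' : s < s' := by
      have : r' + s < r' + s' := by
        rw [hsum]
        calc r' + s < r + s := by
              exact ENNReal.add_lt_add_right (fun h => ht (by rw [← hrs, h, add_top])) hr'
          _ = t := hrs
      exact lt_of_add_lt_add_left this
    have hψ' : ψ s ≤ lower ψ s' := le_iSup_of_le s (le_iSup_of_le hss' le_rfl)
    calc T.mul (φ r') (ψ s) ≤ T.mul (φ r') (lower ψ s') := T.mono _ hψ'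
      _ ≤ _ := by
        apply le_iSup_of_le r'; apply le_iSup_of_le s'; exact le_iSup_of_le hsum le_rfl
end
end

section
/- Let * be a continuous t-norm. Then (Δ, ⊗, κ_{0,1}) is a commutative integral quantale: (i) for all distance distributions φ, ψ, the convolution φ ⊗ ψ is a distance distribution; (ii) ⊗ is commutative and associative on Δ; (iii) φ ⊗ κ_{0,1} = φ for every φ ∈ Δ; (iv) for every φ ∈ Δ and every family (ψ_i)_{i∈I} in Δ, φ ⊗ (sup_i ψ_i) = sup_i (φ ⊗ ψ_i), where suprema are pointwise; (v) κ_{0,1} is the top element of Δ. -/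
open unitInterval
open scoped ENNReal

noncomputable section

namespace ContinuousTNorm

variable (T : ContinuousTNorm)

lemma mono_left (c : I) : Monotone (fun a => T.mul a c) := fun a b h => by
  simpa only [T.comm _ c] using T.mono c h

lemma mul_bot (a : I) : T.mul a ⊥ = ⊥ :=
  le_antisymm (by
    calc T.mul a ⊥ = T.mul ⊥ a := T.comm a ⊥
    _ ≤ T.mul ⊥ 1 := T.mono ⊥ (le_top : a ≤ (1 : I))
    _ = ⊥ := T.mul_one ⊥) bot_le

lemma continuous_mul_right (a : I) : Continuous (T.mul a) :=
  T.continuous'.comp (continuous_const.prodMk continuous_id)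

lemma mul_iSup {ι : Sort*} (a : I) (f : ι → I) :
    T.mul a (⨆ i, f i) = ⨆ i, T.mul a (f i) :=
  Monotone.map_iSup_of_continuousAt (T.continuous_mul_right a).continuousAt
    (T.mono a) (T.mul_bot a)

lemma iSup_mul {ι : Sort*} (f : ι → I) (c : I) :
    T.mul (⨆ i, f i) c = ⨆ i, T.mul (f i) c := by
  rw [T.comm _ c, T.mul_iSup]
  simp only [T.comm c]

lemma mul_le_conv {φ ψ : ℝ≥0∞ → I} {r s t : ℝ≥0∞} (h : r + s = t) :
    T.mul (φ r) (ψ s) ≤ conv T φ ψ t :=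
  le_iSup₂_of_le r s (le_iSup_of_le h le_rfl)

lemma conv_le {φ ψ : ℝ≥0∞ → I} {t : ℝ≥0∞} {c : I}
    (h : ∀ r s, r + s = t → T.mul (φ r) (ψ s) ≤ c) : conv T φ ψ t ≤ c :=
  iSup₂_le fun r s => iSup_le fun hrs => h r s hrs

end ContinuousTNorm

lemma DistDistr.monotone {φ : ℝ≥0∞ → I} (h : DistDistr φ) : Monotone φ := by
  intro a b hab
  rw [h a, h b]
  exact iSup₂_le fun s hs => le_iSup₂_of_le s (hs.trans_le hab) le_rfl

lemma conv_mono (T : ContinuousTNorm) {φ ψ : ℝ≥0∞ → I} (hψ : Monotone ψ) :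
    Monotone (conv T φ ψ) := by
  intro u t hut
  refine T.conv_le fun r s h => ?_
  refine le_trans (T.mono _ (hψ (le_self_add : s ≤ s + (t - u)))) (T.mul_le_conv ?_)
  rw [← add_assoc, h, add_tsub_cancel_of_le hut]

/-- `(Δ, ⊗, κ_{0,1})` is a commutative integral quantale. -/
theorem stmt_5 (T : ContinuousTNorm) :
    (∀ φ ψ : ℝ≥0∞ → I, DistDistr φ → DistDistr ψ → DistDistr (conv T φ ψ)) ∧
    (∀ φ ψ : ℝ≥0∞ → I, DistDistr φ → DistDistr ψ → conv T φ ψ = conv T ψ φ) ∧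
    (∀ φ ψ χ : ℝ≥0∞ → I, DistDistr φ → DistDistr ψ → DistDistr χ →
      conv T (conv T φ ψ) χ = conv T φ (conv T ψ χ)) ∧
    (∀ φ : ℝ≥0∞ → I, DistDistr φ → conv T φ (kappa 0 1) = φ) ∧
    (∀ φ : ℝ≥0∞ → I, DistDistr φ → ∀ (ι : Type) (ψ : ι → ℝ≥0∞ → I),
      (∀ i, DistDistr (ψ i)) →
      conv T φ (fun t => ⨆ i, ψ i t) = fun t => ⨆ i, conv T φ (ψ i) t) ∧
    (∀ φ : ℝ≥0∞ → I, DistDistr φ → ∀ t, φ t ≤ kappa 0 1 t) := by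
  refine ⟨?_, ?_, ?_, ?_, ?_, ?_⟩
  · -- (i) conv is a distance distribution
    intro φ ψ hφ hψ t
    apply le_antisymm
    · refine T.conv_le fun r s h => ?_
      rw [hφ r, hψ s]
      simp only [T.iSup_mul, T.mul_iSup]
      refine iSup₂_le fun a ha => iSup₂_le fun b hb => ?_
      refine le_iSup₂_of_le (a + b) (h ▸ ENNReal.add_lt_add ha hb) ?_
      exact T.mul_le_conv rfl
    · exact iSup₂_le fun u hu => conv_mono T hψ.monotone hu.le
  · -- (ii) commutativity
    intro φ ψ _ _
    funext t
    apply le_antisymm <;>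
      exact T.conv_le fun r s h => by
        rw [T.comm]; exact T.mul_le_conv (by rw [add_comm, h])
  · -- (iii) associativity
    intro φ ψ χ _ _ _
    funext t
    apply le_antisymm
    · refine T.conv_le fun r s h => ?_
      show T.mul (⨆ a, ⨆ b, ⨆ _ : a + b = r, T.mul (φ a) (ψ b)) (χ s) ≤ _
      simp only [T.iSup_mul]
      refine iSup₂_le fun a b => iSup_le fun h' => ?_
      rw [T.assoc]
      refine le_trans (T.mono _ (T.mul_le_conv rfl)) (T.mul_le_conv ?_)
      rw [← add_assoc, h', h]
    · refine T.conv_le fun r s h => ?_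
      show T.mul (φ r) (⨆ b, ⨆ c, ⨆ _ : b + c = s, T.mul (ψ b) (χ c)) ≤ _
      simp only [T.mul_iSup]
      refine iSup₂_le fun b c => iSup_le fun h' => ?_
      rw [← T.assoc]
      refine le_trans (T.mono_left _ (T.mul_le_conv rfl)) (T.mul_le_conv ?_)
      rw [add_assoc, h', h]
  · -- (iv) unit
    intro φ hφ
    funext t
    apply le_antisymm
    · refine T.conv_le fun r s h => ?_
      by_cases hs : s ≤ 0
      · simp only [kappa, if_pos hs]
        exact le_trans (le_of_eq (T.mul_bot _)) bot_le
      · simp only [kappa, if_neg hs]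
        rw [T.mul_one]
        exact hφ.monotone (h ▸ (le_self_add : r ≤ r + s))
    · conv_lhs => rw [hφ t]
      refine iSup₂_le fun u hu => ?_
      have hk : kappa 0 1 (t - u) = 1 := by
        have : ¬ t - u ≤ 0 := by
          rw [le_zero_iff, tsub_eq_zero_iff_le]
          exact not_le_of_gt hu
        simp [kappa, this]
      have : φ u = T.mul (φ u) (kappa 0 1 (t - u)) := by rw [hk, T.mul_one]
      rw [this]
      exact T.mul_le_conv (add_tsub_cancel_of_le hu.le)
  · -- (v) distributes over sups
    intro φ _ ι ψ _
    funext t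
    apply le_antisymm
    · refine T.conv_le fun r s h => ?_
      rw [T.mul_iSup]
      exact iSup_le fun i => le_iSup_of_le i (T.mul_le_conv h)
    · refine iSup_le fun i => T.conv_le fun r s h => ?_
      refine le_trans (T.mono _ (le_iSup (fun j => ψ j s) i)) (T.mul_le_conv (ψ := fun u => ⨆ i, ψ i u) h)
  · -- (vi) top element
    intro φ hφ t
    by_cases ht : t ≤ 0
    · simp only [kappa, if_pos ht]
      rw [hφ t]
      refine iSup₂_le fun s hs => absurd (hs.trans_le ht) ?_
      simp
    · simp only [kappa, if_neg ht]
      exact (le_top : φ t ≤ (1 : I))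
end
end

section
/- Let * be a continuous t-norm, ξ a distance distribution, p ∈ [0,∞), a ∈ [0,1], and define θ : [0,∞] → [0,1] by θ(t) = sup_{s<t} (a →* ξ(p+s)). Then θ is the residual of κ_{p,a} relative to ξ in the quantale of distance distributions: for every distance distribution ψ, κ_{p,a} ⊗ ψ ≤ ξ if and only if ψ ≤ θ. -/
open unitInterval
open scoped ENNReal

noncomputable section

lemma ContinuousTNorm.mul_zero' (T : ContinuousTNorm) (x : I) : T.mul 0 x = 0 :=
  le_antisymm (by simpa [T.mul_one] using T.mono 0 (le_one')) (nonneg')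

lemma ContinuousTNorm.gc (T : ContinuousTNorm) (a b c : I) :
    T.mul a c ≤ b ↔ c ≤ T.residual a b := by
  constructor
  · intro h
    exact le_sSup h
  · intro h
    have hcont : Continuous (T.mul a) := T.continuous'.comp (Continuous.prodMk_right a)
    have hclosed : IsClosed {c : I | T.mul a c ≤ b} :=
      isClosed_le hcont continuous_const
    have hne : Set.Nonempty {c : I | T.mul a c ≤ b} :=
      ⟨0, by rw [Set.mem_setOf_eq, T.comm, T.mul_zero']; exact nonneg'⟩
    have hmem : T.residual a b ∈ {c : I | T.mul a c ≤ b} := by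
      have := csSup_mem_closure hne (OrderTop.bddAbove _)
      rwa [hclosed.closure_eq] at this
    exact le_trans (T.mono a h) hmem

lemma ContinuousTNorm.residual_mono (T : ContinuousTNorm) (a : I) {b b' : I} (h : b ≤ b') :
    T.residual a b ≤ T.residual a b' :=
  sSup_le_sSup fun c hc => le_trans hc h

lemma DistDistr.mono {ξ : ℝ≥0∞ → I} (hξ : DistDistr ξ) : Monotone ξ := by
  intro t1 t2 h
  rw [hξ t1]
  exact iSup_le fun s => iSup_le fun hs => by
    rw [hξ t2]; exact le_iSup_of_le s (le_iSup_of_le (lt_of_lt_of_le hs h) le_rfl)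

/-- `θ t = ⨆ s < t, (a →* ξ (p + s))` is the residual of `κ_{p,a}`
relative to `ξ`: for every distance distribution `ψ`, `κ_{p,a} ⊗ ψ ≤ ξ ↔ ψ ≤ θ`. -/
theorem stmt_9 (T : ContinuousTNorm) (ξ : ℝ≥0∞ → I) (hξ : DistDistr ξ)
    (p : ℝ≥0∞) (hp : p ≠ ∞) (a : I) :
    ∀ ψ : ℝ≥0∞ → I, DistDistr ψ →
      ((∀ t, conv T (kappa p a) ψ t ≤ ξ t) ↔
        ∀ t, ψ t ≤ ⨆ (s : ℝ≥0∞) (_ : s < t), T.residual a (ξ (p + s))) := by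
  intro ψ hψ
  constructor
  · -- conv ≤ ξ → ψ ≤ θ
    intro h t
    rw [hψ t]
    refine iSup_le fun s => iSup_le fun hst => le_iSup_of_le s (le_iSup_of_le hst ?_)
    -- show ψ s ≤ residual a (ξ (p+s))
    rw [hψ s]
    refine iSup_le fun s' => iSup_le fun hs' => ?_
    rw [← T.gc]
    refine le_trans ?_ (h (p + s))
    -- a * ψ s' is a term in conv (kappa p a) ψ (p + s), via r = (p+s) - s'
    have hr : p < (p + s) - s' := by
      rw [add_comm p s, ← ENNReal.sub_add_eq_add_sub hs'.le hs'.ne_top, add_comm]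
      exact ENNReal.lt_add_right hp (tsub_pos_of_lt hs').ne'
    have hsum : ((p + s) - s') + s' = p + s :=
      tsub_add_cancel_of_le (le_trans hs'.le le_add_self)
    refine le_trans ?_ (le_iSup_of_le ((p + s) - s')
      (le_iSup_of_le s' (le_iSup_of_le hsum le_rfl)))
    rw [kappa, if_neg (not_le.mpr hr)]
  · -- ψ ≤ θ → conv ≤ ξ
    intro h t
    refine iSup_le fun r => iSup_le fun s => iSup_le fun hrs => ?_
    rw [kappa]
    split_ifs with hr
    · rw [T.mul_zero']; exact nonneg'
    · rw [T.gc]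
      refine le_trans (h s) (iSup_le fun s' => iSup_le fun hs' => ?_)
      have hle : p + s' ≤ t := by
        rw [← hrs]; exact add_le_add (le_of_not_ge hr) hs'.le
      exact T.residual_mono a (hξ.mono hle)
end
end

section
/- Let * be a continuous t-norm and let φ, ξ be distance distributions. Define (φ ⇒ ξ) : [0,∞] → [0,1] by (φ ⇒ ξ)(t) = sup_{s<t} inf_{q>0} (φ(q) →* ξ(q+s)). Then φ ⇒ ξ is the residual of φ relative to ξ in the quantale of distance distributions: for every distance distribution ψ, φ ⊗ ψ ≤ ξ if and only if ψ ≤ φ ⇒ ξ. -/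
open unitInterval
open scoped ENNReal

noncomputable section

/-! The residual of a continuous t-norm is a right adjoint: `a * c ≤ b ↔ c ≤ a →* b`. Applied
at `q + s`, it turns `φ ⊗ ψ ≤ ξ` into `ψ s ≤ ⨅ q > 0, φ q →* ξ (q + s)`, and left continuity of `ψ`
then gives `ψ ≤ φ ⇒ ξ`. Conversely, for `r > 0` and `s' < s` we get
`ψ s' ≤ φ r →* ξ (r + s') ≤ φ r →* ξ (r + s)` since `ξ` is monotone, and the terms with `r = 0`
vanish because `φ 0 = 0`. -/

namespace ContinuousTNorm

variable (T : ContinuousTNorm)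

theorem mul_zero (a : I) : T.mul a 0 = 0 :=
  le_antisymm (calc
    T.mul a 0 = T.mul 0 a := T.comm a 0
    _ ≤ T.mul 0 1 := T.mono 0 le_one'
    _ = 0 := T.mul_one 0) bot_le

/-- Left continuity of `T.mul a` is what makes the supremum defining the residual attained. -/
theorem mul_residual_le (a b : I) : T.mul a (T.residual a b) ≤ b := by
  have hcont : ContinuousAt (T.mul a) (sSup {c | T.mul a c ≤ b}) :=
    (T.continuous'.comp (Continuous.prodMk_right a)).continuousAt
  rw [residual, (T.mono a).map_sSup_of_continuousAt hcont (T.mul_zero a)]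
  exact sSup_le (Set.forall_mem_image.2 fun _ hc => hc)

theorem gc_mul_residual (a : I) : GaloisConnection (T.mul a) (T.residual a) := fun _ c =>
  ⟨fun h => le_sSup h, fun h => (T.mono a h).trans (T.mul_residual_le a c)⟩

end ContinuousTNorm

namespace DistDistr

variable {φ : ℝ≥0∞ → I} (hφ : DistDistr φ)
include hφ

theorem monotone_s11 : Monotone φ := fun t t' htt' => by
  rw [hφ t, hφ t']
  exact biSup_mono fun _ hs => hs.trans_le htt'

theorem apply_zero : φ 0 = 0 := by
  rw [hφ 0]
  simp only [ENNReal.not_lt_zero, iSup_false, iSup_const]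
  rfl

end DistDistr

/-- `(φ ⇒ ξ) t = ⨆ s < t, ⨅ q > 0, (φ q →* ξ (q + s))` is the residual
of `φ` relative to `ξ`: for every distance distribution `ψ`, `φ ⊗ ψ ≤ ξ ↔ ψ ≤ φ ⇒ ξ`. -/
theorem stmt_11 (T : ContinuousTNorm) (φ ξ : ℝ≥0∞ → I) (hφ : DistDistr φ) (hξ : DistDistr ξ) :
    ∀ ψ : ℝ≥0∞ → I, DistDistr ψ →
      ((∀ t, conv T φ ψ t ≤ ξ t) ↔
        ∀ t, ψ t ≤ ⨆ (s : ℝ≥0∞) (_ : s < t), ⨅ (q : ℝ≥0∞) (_ : 0 < q),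
          T.residual (φ q) (ξ (q + s))) := by
  intro ψ hψ
  constructor
  · intro h t
    rw [hψ t]
    refine iSup₂_mono fun s _ => le_iInf₂ fun q _ => (T.gc_mul_residual (φ q)).le_iff_le.1 ?_
    exact (h (q + s)).trans' (le_iSup₂_of_le q s (le_iSup_of_le rfl le_rfl))
  · intro h t
    refine iSup₂_le fun r s => iSup_le fun hrs => ?_
    rcases eq_zero_or_pos r with rfl | hr
    · rw [hφ.apply_zero, T.comm, T.mul_zero]
      exact bot_le
    refine (T.gc_mul_residual _).le_iff_le.2 ((h s).trans (iSup₂_le fun s' hs' => ?_))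
    refine (iInf₂_le r hr).trans ((T.gc_mul_residual _).monotone_u (hξ.monotone_s11 ?_))
    rw [← hrs]
    exact add_le_add_right hs'.le r
end
end

section
/- Let φ, ψ be distance distributions and let ⊗_∧ denote convolution with respect to the minimum t-norm, (φ ⊗_∧ ψ)(t) = sup_{r+s=t} min(φ(r), ψ(s)). Then (φ ⊗_∧ ψ)♭ = φ♭ + ψ♭, i.e., for every a ∈ [0,1], sup{t ∈ [0,∞] : (φ ⊗_∧ ψ)(t) ≤ a} = sup{t : φ(t) ≤ a} + sup{t : ψ(t) ≤ a}. -/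
open unitInterval
open scoped ENNReal

noncomputable section

/-- Convolution w.r.t. the minimum t-norm. -/
def convMin (φ ψ : ℝ≥0∞ → I) : ℝ≥0∞ → I :=
  fun t => ⨆ (r : ℝ≥0∞) (s : ℝ≥0∞) (_ : r + s = t), φ r ⊓ ψ s

/-- The right adjoint `φ♭` of a distance distribution `φ`. -/
def flat (φ : ℝ≥0∞ → I) : I → ℝ≥0∞ :=
  fun a => sSup {p : ℝ≥0∞ | φ p ≤ a}

lemma DistDistr.mono_s15 {φ : ℝ≥0∞ → I} (hφ : DistDistr φ) : Monotone φ := by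
  intro s t hst
  rcases eq_or_lt_of_le hst with rfl | h
  · exact le_rfl
  · rw [hφ t]
    exact le_iSup₂ (f := fun u (_ : u < t) => φ u) s h

lemma flat_apply_le {φ : ℝ≥0∞ → I} (hφ : DistDistr φ) (a : I) : φ (flat φ a) ≤ a := by
  rw [hφ]
  refine iSup₂_le fun s hs => ?_
  obtain ⟨p, hp, hsp⟩ := lt_sSup_iff.mp (show s < sSup {p : ℝ≥0∞ | φ p ≤ a} from hs)
  exact (hφ.mono_s15 hsp.le).trans hp

lemma not_le_of_flat_lt {φ : ℝ≥0∞ → I} {a : I} {r : ℝ≥0∞} (h : flat φ a < r) :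
    ¬ φ r ≤ a := fun hr => absurd (le_sSup (show r ∈ {p : ℝ≥0∞ | φ p ≤ a} from hr)) (not_le.2 h)

/-- `(φ ⊗_∧ ψ)♭ = φ♭ + ψ♭`. -/
theorem stmt_15 (φ ψ : ℝ≥0∞ → I) (hφ : DistDistr φ) (hψ : DistDistr ψ) :
    ∀ a : I, flat (convMin φ ψ) a = flat φ a + flat ψ a := by
  intro a
  set A := flat φ a with hA
  set B := flat ψ a with hB
  apply le_antisymm
  · refine sSup_le fun t ht => ?_
    have ht : convMin φ ψ t ≤ a := ht
    by_contra hlt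
    push_neg at hlt
    have hBtop : B ≠ ∞ := fun h => by simp [h] at hlt
    have hArt : A < t - B := lt_tsub_iff_right.mpr hlt
    obtain ⟨r, hAr, hrt⟩ := exists_between hArt
    have hrt' : r ≤ t := hrt.le.trans tsub_le_self
    have hrs : r + (t - r) = t := add_tsub_cancel_of_le hrt'
    have hsB : B < t - r := by
      rw [lt_tsub_iff_left]
      exact lt_tsub_iff_right.mp hrt
    have hle : φ r ⊓ ψ (t - r) ≤ a :=
      le_trans (le_iSup₂_of_le r (t - r) (le_iSup (fun _ : r + (t - r) = t => φ r ⊓ ψ (t - r)) hrs)) ht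
    rcases inf_le_iff.mp hle with h | h
    · exact not_le_of_flat_lt hAr h
    · exact not_le_of_flat_lt hsB h
  · refine le_sSup ?_
    show convMin φ ψ (A + B) ≤ a
    refine iSup₂_le fun r s => iSup_le fun hrs => ?_
    rcases le_or_gt r A with h | h
    · exact le_trans inf_le_left ((hφ.mono_s15 h).trans (flat_apply_le hφ a))
    · have hs : s ≤ B := by
        by_contra hs
        push_neg at hs
        exact absurd hrs (ne_of_gt (ENNReal.add_lt_add h hs))
      exact le_trans inf_le_right ((hψ.mono_s15 hs).trans (flat_apply_le hψ a))
end
end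

section
/- Let Q be a complete lattice equipped with a commutative monoid operation ⊗ with unit 1 such that ⊗ preserves arbitrary suprema in each variable, 1 is the top element of Q (integrality), and Q is divisible: for all d ≤ q in Q there exists p with q ⊗ p = d. Let p → q denote the residual sup{r : p ⊗ r ≤ q}. Let X be a set, α : X × X → Q with α(x,x) = 1 and α(y,z) ⊗ α(x,y) ≤ α(x,z) for all x, y, z ∈ X, and let f : X → Q satisfy α(x,y) ≤ (f x) → (f y) for all x, y ∈ X. Define α_f(x,y) = α(x,y) ⊗ f x. Then for all x, y, z ∈ X: (i) α_f(x,x) = f x; (ii) α_f(x,y) ≤ α_f(x,x) ⊓ α_f(y,y); and (iii) α_f(y,z) ⊗ (α_f(y,y) → α_f(x,y)) ≤ α_f(x,z). -/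
/-- in a divisible commutative integral quantale `Q`, given a
`Q`-category `(X, α)` and a `Q`-functor `f : (X, α) → (Q, →)`, the map
`α_f (x, y) = α x y ⊗ f x` satisfies the axioms of a `D Q`-category structure. -/
theorem stmt_19 {Q : Type*} [CompleteLattice Q] (mul : Q → Q → Q) (one : Q)
    (hcomm : ∀ a b, mul a b = mul b a)
    (hassoc : ∀ a b c, mul (mul a b) c = mul a (mul b c))
    (hmul_one : ∀ a, mul a one = a)
    (hone_top : one = ⊤)
    (hsup_left : ∀ (S : Set Q) (a : Q), mul (sSup S) a = ⨆ b ∈ S, mul b a)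
    (hsup_right : ∀ (a : Q) (S : Set Q), mul a (sSup S) = ⨆ b ∈ S, mul a b)
    (hdiv : ∀ d q : Q, d ≤ q → ∃ p, mul q p = d)
    {X : Type*} (α : X → X → Q)
    (hrefl : ∀ x, α x x = one)
    (htrans : ∀ x y z, mul (α y z) (α x y) ≤ α x z)
    (f : X → Q)
    (hf : ∀ x y, α x y ≤ sSup {r | mul (f x) r ≤ f y}) :
    ∀ x y z : X,
      mul (α x x) (f x) = f x ∧
      mul (α x y) (f x) ≤ mul (α x x) (f x) ⊓ mul (α y y) (f y) ∧
      mul (mul (α y z) (f y)) (sSup {r | mul (mul (α y y) (f y)) r ≤ mul (α x y) (f x)})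
        ≤ mul (α x z) (f x) := by
  -- monotonicity of mul
  have hone_mul : ∀ a, mul one a = a := fun a => (hcomm one a).trans (hmul_one a)
  have hmono : ∀ {a b : Q} (c : Q), a ≤ b → mul a c ≤ mul b c := by
    intro a b c hab
    have : sSup {a, b} = b := by
      apply le_antisymm (sSup_le ?_) (le_sSup (by simp))
      rintro x (rfl | rfl) <;> simp [hab]
    calc mul a c ≤ ⨆ x ∈ ({a, b} : Set Q), mul x c :=
          le_iSup₂_of_le a (by simp) le_rfl
      _ = mul (sSup {a, b}) c := (hsup_left _ _).symm
      _ = mul b c := by rw [this]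
  have hmono' : ∀ (a : Q) {b c : Q}, b ≤ c → mul a b ≤ mul a c := by
    intro a b c h
    rw [hcomm a b, hcomm a c]; exact hmono a h
  -- adjunction
  have hadj : ∀ a b : Q, mul a (sSup {r | mul a r ≤ b}) ≤ b := by
    intro a b
    rw [hsup_right]
    exact iSup₂_le fun r hr => hr
  intro x y z
  have h1 : ∀ w, mul (α w w) (f w) = f w := fun w => by rw [hrefl, hone_mul]
  have h2 : mul (α x y) (f x) ≤ f y := by
    calc mul (α x y) (f x) = mul (f x) (α x y) := hcomm _ _
      _ ≤ mul (f x) (sSup {r | mul (f x) r ≤ f y}) := hmono' _ (hf x y)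
      _ ≤ f y := hadj _ _
  refine ⟨h1 x, ?_, ?_⟩
  · rw [h1 x, h1 y]
    refine le_inf ?_ h2
    calc mul (α x y) (f x) = mul (f x) (α x y) := hcomm _ _
      _ = mul (f x) (α x y) := rfl
      _ ≤ mul (f x) one := hmono' _ (by rw [hone_top]; exact le_top)
      _ = f x := hmul_one _
  · have hyy : mul (α y y) (f y) = f y := h1 y
    rw [hyy]
    set s := sSup {r | mul (f y) r ≤ mul (α x y) (f x)} with hs
    calc mul (mul (α y z) (f y)) s = mul (α y z) (mul (f y) s) := hassoc _ _ _
      _ ≤ mul (α y z) (mul (α x y) (f x)) := hmono' _ (hadj _ _)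
      _ = mul (mul (α y z) (α x y)) (f x) := (hassoc _ _ _).symm
      _ ≤ mul (α x z) (f x) := hmono _ (htrans x y z)
end
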